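/- Reductions are unique: if x̄ ↝ ȳ with ȳ reduced and x̄ ↝ z̄ with z̄ reduced, then ȳ = z̄. -/
import Mathlib


/-- The alphabet {l, r, λ, ρ, n}. -/
inductive Alpha : Type
  | l | r | lam | rho | n
deriving DecidableEq

/-- Finite words over the alphabet. -/
abbrev Word := List Alpha

/-- Immediate reduction ↝′ on words: x̄lλȳ ↝′ x̄ρȳ, x̄rλȳ ↝′ x̄ȳ, x̄λrȳ ↝′ x̄ȳ,
x̄ρrȳ ↝′ x̄lȳ, x̄nnȳ ↝′ x̄ȳ. -/
inductive Step : Word → Word → Prop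
  | llam (x y : Word) : Step (x ++ [.l, .lam] ++ y) (x ++ [.rho] ++ y)
  | rlam (x y : Word) : Step (x ++ [.r, .lam] ++ y) (x ++ y)
  | lamr (x y : Word) : Step (x ++ [.lam, .r] ++ y) (x ++ y)
  | rhor (x y : Word) : Step (x ++ [.rho, .r] ++ y) (x ++ [.l] ++ y)
  | nn (x y : Word) : Step (x ++ [.n, .n] ++ y) (x ++ y)

/-- A word is reduced if no immediate reduction step applies to it. -/
def Reduced (w : Word) : Prop := ∀ v, ¬ Step w v

/-- Reduction ↝ is the reflexive-transitive closure of immediate reduction. -/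
def Reduces : Word → Word → Prop := Relation.ReflTransGen Step

/-- `bad a b` iff the two-letter word `ab` is a redex. -/
def bad : Alpha → Alpha → Bool
  | .l, .lam => true
  | .r, .lam => true
  | .lam, .r => true
  | .rho, .r => true
  | .n, .n => true
  | _, _ => false

/-- Push a letter onto a reversed accumulator, performing reductions. -/
def pushR : Word → Alpha → Word
  | [], c => [c]
  | .l :: t, .lam => .rho :: t
  | .r :: t, .lam => t
  | .lam :: t, .r => t
  | .rho :: t, .r => .l :: t
  | .n :: t, .n => t
  | h :: t, c => c :: h :: t

lemma pushR_eq_cons {h c : Alpha} (t : Word) (hb : bad h c = false) :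
    pushR (h :: t) c = c :: h :: t := by
  cases h <;> cases c <;> simp_all [pushR, bad]

/-- A reversed accumulator with no redex in the corresponding word. -/
def Good (a : Word) : Prop := List.Chain' (fun x y => bad y x = false) a

lemma bad_snd_rho (y : Alpha) : bad y .rho = false := by cases y <;> rfl
lemma bad_snd_l (y : Alpha) : bad y .l = false := by cases y <;> rfl

lemma good_push {a : Word} (ha : Good a) (c : Alpha) : Good (pushR a c) := by
  rcases a with _ | ⟨h, t⟩
  · exact List.isChain_singleton c
  · cases h <;> cases c <;> simp only [pushR] <;>
      first
        | exact ha.tail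
        | exact List.isChain_cons_cons.mpr ⟨rfl, ha⟩
        | exact List.isChain_cons.mpr ⟨fun y _ => bad_snd_rho y, ha.tail⟩
        | exact List.isChain_cons.mpr ⟨fun y _ => bad_snd_l y, ha.tail⟩

lemma good_foldl : ∀ (w a : Word), Good a → Good (w.foldl pushR a)
  | [], _, ha => ha
  | c :: w, a, ha => good_foldl w (pushR a c) (good_push ha c)

lemma Step.cons {u v : Word} (c : Alpha) (h : Step u v) : Step (c :: u) (c :: v) := by
  cases h with
  | llam x y => simpa using Step.llam (c :: x) y
  | rlam x y => simpa using Step.rlam (c :: x) y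
  | lamr x y => simpa using Step.lamr (c :: x) y
  | rhor x y => simpa using Step.rhor (c :: x) y
  | nn x y => simpa using Step.nn (c :: x) y

lemma exists_step : ∀ (w : Word), ¬ List.Chain' (fun x y => bad x y = false) w →
    ∃ v, Step w v
  | [], h => absurd List.isChain_nil h
  | [c], h => absurd (List.isChain_singleton c) h
  | a :: b :: t, h => by
    by_cases hab : bad a b = true
    · cases a <;> cases b <;> (try exact absurd hab (by decide))
      · exact ⟨_, by simpa using Step.llam [] t⟩
      · exact ⟨_, by simpa using Step.rlam [] t⟩
      · exact ⟨_, by simpa using Step.lamr [] t⟩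
      · exact ⟨_, by simpa using Step.rhor [] t⟩
      · exact ⟨_, by simpa using Step.nn [] t⟩
    · have hnc : ¬ List.Chain' (fun x y => bad x y = false) (b :: t) := fun hc =>
        h (List.isChain_cons_cons.mpr ⟨by simpa using hab, hc⟩)
      obtain ⟨v, hv⟩ := exists_step (b :: t) hnc
      exact ⟨a :: v, hv.cons a⟩

lemma reduced_chain {w : Word} (hw : Reduced w) :
    List.Chain' (fun x y => bad x y = false) w := by
  by_contra hc
  obtain ⟨v, hv⟩ := exists_step w hc
  exact hw v hv

lemma foldl_of_chain : ∀ (w a : Word),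
    List.Chain' (fun x y => bad x y = false) w →
    (∀ x c, a.head? = some x → w.head? = some c → bad x c = false) →
    w.foldl pushR a = w.reverse ++ a
  | [], a, _, _ => by simp
  | c :: w, a, hch, hhd => by
    have h1 : pushR a c = c :: a := by
      rcases a with _ | ⟨x, t⟩
      · rfl
      · exact pushR_eq_cons t (hhd x c rfl rfl)
    rw [List.foldl_cons, h1, foldl_of_chain w (c :: a) hch.tail ?_]
    · simp
    · intro x c' hx hc'
      rcases w with _ | ⟨c'', w2⟩
      · simp at hc'
      · simp only [List.head?_cons, Option.some.injEq] at hx hc'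
        subst hx; subst hc'
        exact (List.isChain_cons_cons.mp hch).1

lemma step_foldl {u v : Word} (h : Step u v) {a : Word} (ha : Good a) :
    u.foldl pushR a = v.foldl pushR a := by
  cases h with
  | llam x y =>
    simp only [List.foldl_append]
    congr 1
    rcases x.foldl pushR a with _ | ⟨h, t⟩
    · rfl
    · cases h <;> rfl
  | rlam x y =>
    simp only [List.foldl_append]
    congr 1
    have hb : Good (x.foldl pushR a) := good_foldl x a ha
    rcases hx : x.foldl pushR a with _ | ⟨h, t⟩
    · rfl
    · rw [hx] at hb
      cases h <;> try rfl
      -- lam case: pushR (pushR (lam::t) r) lam = pushR t lam = lam::t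
      show pushR t .lam = .lam :: t
      rcases t with _ | ⟨h', t'⟩
      · rfl
      · exact pushR_eq_cons t' (List.isChain_cons_cons.mp hb).1
  | lamr x y =>
    simp only [List.foldl_append]
    congr 1
    have hb : Good (x.foldl pushR a) := good_foldl x a ha
    rcases hx : x.foldl pushR a with _ | ⟨h, t⟩
    · rfl
    · rw [hx] at hb
      cases h <;> try rfl
      -- r case: pushR (pushR (r::t) lam) r = pushR t r = r::t
      show pushR t .r = .r :: t
      rcases t with _ | ⟨h', t'⟩
      · rfl
      · exact pushR_eq_cons t' (List.isChain_cons_cons.mp hb).1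
  | rhor x y =>
    simp only [List.foldl_append]
    congr 1
    rcases x.foldl pushR a with _ | ⟨h, t⟩
    · rfl
    · cases h <;> rfl
  | nn x y =>
    simp only [List.foldl_append]
    congr 1
    have hb : Good (x.foldl pushR a) := good_foldl x a ha
    rcases hx : x.foldl pushR a with _ | ⟨h, t⟩
    · rfl
    · rw [hx] at hb
      cases h <;> try rfl
      show pushR t .n = .n :: t
      rcases t with _ | ⟨h', t'⟩
      · rfl
      · exact pushR_eq_cons t' (List.isChain_cons_cons.mp hb).1

lemma reduces_foldl {u v : Word} (h : Reduces u v) :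
    u.foldl pushR [] = v.foldl pushR [] := by
  induction h with
  | refl => rfl
  | tail _ h2 ih => rw [ih, step_foldl h2 List.isChain_nil]

lemma reduced_foldl {w : Word} (hw : Reduced w) : w.foldl pushR [] = w.reverse := by
  rw [foldl_of_chain w [] (reduced_chain hw) (by intro x c hx; simp at hx)]
  simp

/-- Reductions are unique: if x̄ reduces to reduced words ȳ and z̄, then ȳ = z̄. -/
theorem reductions_unique {x y z : Word} (hy : Reduces x y) (hyr : Reduced y)
    (hz : Reduces x z) (hzr : Reduced z) : y = z := by
  have h : y.reverse = z.reverse := by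
    rw [← reduced_foldl hyr, ← reduced_foldl hzr, ← reduces_foldl hy, ← reduces_foldl hz]
  exact List.reverse_injective h
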